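/- arXiv:1808.08403 — 2 statements merged into one kernel-verified Lean document; each statement's English description precedes it below -/
import Mathlib

section
/- Receipt-freeness implies prescription privacy: in an abstract setting where labelled bisimilarity ≈ is an equivalence relation closed under application of the hiding context H(X) = ν chc.(X | !in(chc)), and where hiding distributes over the ambient context (C[X])^{hide chc} ≈ C[X^{hide chc}] when chc is fresh for C, and where hiding undoes revelation ((Q^{chc})^{hide chc} ≈ Q for chc fresh in Q), if there exists a lying process D' such that (1) C[D' | E(pA)] ≈ C[D^{chc}(pA) | E(pB)] and (2) C[hide(D')| E(pA)] ≈ C[D(pB) | E(pA)], then C[D(pA) | E(pB)] ≈ C[D(pB) | E(pA)]. -/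
/-- Receipt-freeness implies prescription privacy, in the abstract
hiding/revelation axiomatization. -/
theorem receipt_freeness_implies_prescription_privacy
    {Proc : Type*} {Presc : Type*}
    (equiv : Proc → Proc → Prop) (hEquiv : Equivalence equiv)
    (C : Proc → Proc) (par : Proc → Proc → Proc)
    (hide reveal : Proc → Proc)
    (hC : ∀ {X Y}, equiv X Y → equiv (C X) (C Y))
    (hHide : ∀ {X Y}, equiv X Y → equiv (hide X) (hide Y))
    (hPar : ∀ {X Y} (Z : Proc), equiv X Y → equiv (par X Z) (par Y Z))
    -- Lemma 1: hiding commutes with the ambient context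
    -- (the hidden channel is fresh for C and the parallel component Y)
    (lemma1 : ∀ X Y, equiv (hide (C (par X Y))) (C (par (hide X) Y)))
    -- Lemma 2: hiding undoes revelation
    (lemma2 : ∀ Q, equiv (hide (reveal Q)) Q)
    (D E : Presc → Proc) (D' : Proc) (pA pB : Presc)
    -- receipt-freeness equivalences for the lying process D'
    (h1 : equiv (C (par D' (E pA))) (C (par (reveal (D pA)) (E pB))))
    (h2 : equiv (C (par (hide D') (E pA))) (C (par (D pB) (E pA)))) :
    -- prescription privacy
    equiv (C (par (D pA) (E pB))) (C (par (D pB) (E pA))) := by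
  obtain ⟨refl, symm, trans⟩ := hEquiv
  exact trans (symm (hC (hPar _ (lemma2 (D pA)))))
    (trans (symm (lemma1 (reveal (D pA)) (E pB)))
      (trans (hHide (symm h1)) (trans (lemma1 D' (E pA)) h2)))
end

section
/- Independency of prescription privacy implies prescription privacy: if the protocol with a bribed third-party role R^{chc} running alongside the two doctors satisfies the swap indistinguishability, then the protocol with the honest role R also satisfies it; formally, from C[!reveal(R) | D(dA,pA) | D(dB,pB)] ≈ C[!reveal(R) | D(dA,pB) | D(dB,pA)] and the hiding axioms, derive C[!R | D(dA,pA) | D(dB,pB)] ≈ C[!R | D(dA,pB) | D(dB,pA)]. -/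
/-- Independency of prescription privacy implies prescription privacy:
from the swap indistinguishability with the bribed third-party role
`!reveal(R)`, derive the swap indistinguishability with the honest role
`!R`, using the hiding axioms. -/
theorem independency_implies_prescription_privacy
    {Proc : Type*} {Id : Type*} {Presc : Type*}
    (equiv : Proc → Proc → Prop) (hEquiv : Equivalence equiv)
    (C : Proc → Proc) (par : Proc → Proc → Proc)
    (repl : Proc → Proc) (hide reveal : Proc → Proc)
    (R : Proc)
    (hC : ∀ {X Y}, equiv X Y → equiv (C X) (C Y))
    (hHide : ∀ {X Y}, equiv X Y → equiv (hide X) (hide Y))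
    (hParL : ∀ {X Y} (Z : Proc), equiv X Y → equiv (par X Z) (par Y Z))
    (hParR : ∀ {X Y} (Z : Proc), equiv X Y → equiv (par Z X) (par Z Y))
    -- Lemma 1: hiding commutes with the context, acting only on the
    -- component containing the hidden channel
    (lemma1 : ∀ X, equiv (hide (C (par (repl (reveal R)) X)))
                          (C (par (hide (repl (reveal R))) X)))
    -- Lemma 2: hiding undoes revelation, also under replication
    (lemma2 : equiv (hide (repl (reveal R))) (repl R))
    (D : Id → Presc → Proc) (dA dB : Id) (pA pB : Presc)
    -- independency of prescription privacy hypothesis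
    (h : equiv (C (par (repl (reveal R)) (par (D dA pA) (D dB pB))))
               (C (par (repl (reveal R)) (par (D dA pB) (D dB pA))))) :
    -- prescription privacy with the honest role
    equiv (C (par (repl R) (par (D dA pA) (D dB pB))))
          (C (par (repl R) (par (D dA pB) (D dB pA)))) := by
  obtain ⟨refl, symm, trans⟩ := hEquiv
  have step : ∀ X, equiv (C (par (repl R) X)) (hide (C (par (repl (reveal R)) X))) := fun X =>
    trans (hC (hParL X (symm lemma2))) (symm (lemma1 X))
  exact trans (step _) (trans (hHide h) (symm (step _)))
end
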